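/- arXiv:0910.5130 — 2 statements merged into one kernel-verified Lean document; each statement's English description precedes it below -/
import Mathlib

section
/- Let p = 2 or p = 3, and let K be an algebraically closed field of characteristic p. An elliptic curve E over K is supersingular (i.e. its group of K-points has trivial p-torsion) if and only if j(E) = 0. (In the notation of the supersingular polynomial: for p = 2 or 3 one may take Φ(j) = j.) -/
/-!
Over any field the doubling formula gives `x(2P) - x = -ψ₃(x) / ψ₂(P)²`, so a point with
`2P ≠ 0` is `3`-torsion exactly when `ψ₃(x) = 0`, while `P` is `2`-torsion exactly when
`ψ₂(P) = 2y + a₁x + a₃` vanishes.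

In characteristic `2` the latter condition reads `a₁x + a₃ = 0`. If `a₁ ≠ 0`, the points above
`x = a₃ / a₁` are nonzero `2`-torsion points; if `a₁ = 0`, a `2`-torsion point forces `a₃ = 0` and
hence `Δ = 0`. In characteristic `3` we have `ψ₃ = b₂X³ + b₈`. If `b₂ ≠ 0` it has a root `x`, and
the points above `x` are not `2`-torsion, because a common root of `ψ₂²` and `ψ₃` forces `Δ = 0`;
if `b₂ = 0` then `ψ₃ = b₈`, which is nonzero since `b₈ = -b₄²` and `Δ = -8b₄³`. Finally, `j = 0`
means `a₁ = 0` in characteristic `2` and `b₂ = 0` in characteristic `3`.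
-/

open Polynomial

namespace WeierstrassCurve

lemma Ψ₃_of_char_three {R : Type*} [CommRing R] [CharP R 3] (W : WeierstrassCurve R) :
    W.Ψ₃ = C W.b₂ * X ^ 3 + C W.b₈ := by
  rw [Ψ₃, CharP.ofNat_eq_zero R[X] 3]
  ring

variable {F : Type*} [Field F] (W : WeierstrassCurve F)

lemma exists_equation_of_isAlgClosed [IsAlgClosed F] (x : F) :
    ∃ y, W.toAffine.Equation x y := by
  have hdeg : (W.toAffine.polynomial.map (evalRingHom x)).natDegree = 2 := by
    rw [W.toAffine.monic_polynomial.natDegree_map, W.toAffine.natDegree_polynomial]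
  obtain ⟨y, hy⟩ := IsAlgClosed.exists_root _ (degree_ne_of_natDegree_ne (hdeg ▸ two_ne_zero))
  exact ⟨y, by rwa [IsRoot, map_evalRingHom_eval] at hy⟩

lemma eval_Ψ₂Sq_of_equation {x y : F} (h : W.toAffine.Equation x y) :
    W.Ψ₂Sq.eval x = (y - W.toAffine.negY x y) ^ 2 := by
  rw [Affine.equation_iff] at h
  simp only [Ψ₂Sq, Affine.negY, b₂, b₄, b₆, eval_add, eval_mul, eval_pow, eval_C, eval_X]
  linear_combination (-4) * h

lemma Y_eq_negY_iff_of_char_two [CharP F 2] {x y : F} :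
    y = W.toAffine.negY x y ↔ W.a₁ * x + W.a₃ = 0 := by
  rw [Affine.negY, CharTwo.sub_eq_add, CharTwo.sub_eq_add, CharTwo.neg_eq, add_assoc,
    left_eq_add]

section CharThree

variable [CharP F 3]

lemma Δ_eq_zero_of_char_three {x : F} (h₂ : W.Ψ₂Sq.eval x = 0) (h₃ : W.Ψ₃.eval x = 0) :
    W.Δ = 0 := by
  have h3 : (3 : F) = 0 := CharP.ofNat_eq_zero F 3
  simp only [Ψ₂Sq, Ψ₃_of_char_three, eval_add, eval_mul, eval_pow, eval_C, eval_X] at h₂ h₃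
  have hb₄ : W.b₄ = -W.b₂ * x := by
    have hsq : (W.b₂ * x + W.b₄) ^ 2 = 0 := by
      linear_combination W.b₂ * h₂ - h₃ + W.b_relation_of_char_three - W.b₂ * x ^ 3 * h3
    linear_combination pow_eq_zero_iff two_ne_zero |>.mp hsq
  rw [Δ_of_char_three, hb₄]
  linear_combination (-W.b₂ ^ 2) * h₃ + 3 * W.b₂ ^ 3 * x ^ 3 * h3

lemma b₈_ne_zero_of_char_three [W.IsElliptic] (hb₂ : W.b₂ = 0) : W.b₈ ≠ 0 := by
  intro hb₈
  have hb₄ : W.b₄ = 0 := by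
    have := W.b_relation_of_char_three
    rw [hb₂, hb₈] at this
    exact pow_eq_zero_iff two_ne_zero |>.mp (by linear_combination this)
  exact W.isUnit_Δ.ne_zero (by rw [Δ_of_char_three, hb₂, hb₄]; ring)

end CharThree

variable [DecidableEq F]

lemma addX_slope_self_sub_mul {x y : F} (h : W.toAffine.Equation x y)
    (hy : y ≠ W.toAffine.negY x y) :
    (W.toAffine.addX x x (W.toAffine.slope x x y y) - x) * (y - W.toAffine.negY x y) ^ 2 =
      -W.Ψ₃.eval x := by
  set n := 3 * x ^ 2 + 2 * W.a₂ * x + W.a₄ - W.a₁ * y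
  set d := y - W.toAffine.negY x y
  have hd : d ≠ 0 := sub_ne_zero.mpr hy
  have hnd : n ^ 2 + W.a₁ * n * d - (W.a₂ + 3 * x) * d ^ 2 = -W.Ψ₃.eval x := by
    rw [Affine.equation_iff] at h
    simp only [n, d, Ψ₃, Affine.negY, b₂, b₄, b₆, b₈, eval_add, eval_mul, eval_pow, eval_C,
      eval_X, eval_ofNat]
    linear_combination (-(W.a₁ ^ 2 + 4 * W.a₂) - 12 * x) * h
  rw [← hnd, Affine.slope_of_Y_ne rfl hy, Affine.addX]
  field_simp
  ring

namespace Affine.Point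

variable {W} {x y : F} (h : W.toAffine.Nonsingular x y)

lemma two_nsmul_some_eq_zero_iff : 2 • some x y h = 0 ↔ y = W.toAffine.negY x y := by
  rw [two_nsmul]
  refine ⟨fun h2 ↦ ?_, add_self_of_Y_eq⟩
  by_contra hy
  exact some_ne_zero _ (by rwa [add_self_of_Y_ne hy] at h2)

lemma three_nsmul_some_eq_zero_iff :
    3 • some x y h = 0 ↔ y ≠ W.toAffine.negY x y ∧ W.Ψ₃.eval x = 0 := by
  by_cases hy : y = W.toAffine.negY x y
  · rw [succ_nsmul, (two_nsmul_some_eq_zero_iff h).mpr hy, zero_add]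
    exact iff_of_false (some_ne_zero h) fun h3 ↦ h3.1 hy
  have hd : (y - W.toAffine.negY x y) ^ 2 ≠ 0 := pow_ne_zero 2 (sub_ne_zero.mpr hy)
  have h2P : 2 • some x y h = -some x y h ↔
      W.toAffine.addX x x (W.toAffine.slope x x y y) = x := by
    rw [two_nsmul, add_self_of_Y_ne hy, neg_some, some.injEq, and_iff_left_iff_imp]
    intro hx
    rw [Affine.addY, Affine.negAddY, hx, sub_self, mul_zero, zero_add]
  rw [succ_nsmul, ← eq_neg_iff_add_eq_zero, h2P, ← sub_eq_zero,
    ← mul_eq_zero_iff_right hd, addX_slope_self_sub_mul W h.1 hy, neg_eq_zero]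
  exact (and_iff_right hy).symm

end Affine.Point

open Affine.Point

variable [IsAlgClosed F] [W.IsElliptic]

theorem trivial_two_torsion_iff_a₁_eq_zero_of_char_two [CharP F 2] :
    (∀ P : W.toAffine.Point, 2 • P = 0 → P = 0) ↔ W.a₁ = 0 := by
  constructor
  · intro htors
    by_contra ha₁
    obtain ⟨y, hxy⟩ := W.exists_equation_of_isAlgClosed (W.a₃ / W.a₁)
    have hns := W.toAffine.equation_iff_nonsingular.mp hxy
    refine some_ne_zero hns (htors _ ?_)
    rw [two_nsmul_some_eq_zero_iff, Y_eq_negY_iff_of_char_two, mul_div_cancel₀ _ ha₁,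
      CharTwo.add_self_eq_zero]
  · rintro ha₁ (_ | @⟨x, y, h⟩) h2
    · rfl
    rw [two_nsmul_some_eq_zero_iff, Y_eq_negY_iff_of_char_two, ha₁, zero_mul, zero_add] at h2
    exact (W.isUnit_Δ.ne_zero (by rw [Δ_of_char_two, ha₁, h2]; ring)).elim

theorem trivial_three_torsion_iff_b₂_eq_zero_of_char_three [CharP F 3] :
    (∀ P : W.toAffine.Point, 3 • P = 0 → P = 0) ↔ W.b₂ = 0 := by
  constructor
  · intro htors
    by_contra hb₂
    obtain ⟨x, hx⟩ := IsAlgClosed.exists_pow_nat_eq (-W.b₈ / W.b₂) three_pos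
    have hΨ₃ : W.Ψ₃.eval x = 0 := by
      simp only [Ψ₃_of_char_three, eval_add, eval_mul, eval_pow, eval_C, eval_X, hx]
      field_simp
      ring
    obtain ⟨y, hxy⟩ := W.exists_equation_of_isAlgClosed x
    have hns := W.toAffine.equation_iff_nonsingular.mp hxy
    have hy : y ≠ W.toAffine.negY x y := fun hy ↦ W.isUnit_Δ.ne_zero <|
      W.Δ_eq_zero_of_char_three
        (by rw [W.eval_Ψ₂Sq_of_equation hxy, ← hy, sub_self, sq, zero_mul]) hΨ₃
    exact some_ne_zero hns (htors _ ((three_nsmul_some_eq_zero_iff hns).mpr ⟨hy, hΨ₃⟩))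
  · rintro hb₂ (_ | @⟨x, y, h⟩) h3
    · rfl
    rw [three_nsmul_some_eq_zero_iff, Ψ₃_of_char_three] at h3
    simp only [eval_add, eval_mul, eval_pow, eval_C, eval_X, hb₂, zero_mul, zero_add] at h3
    exact absurd h3.2 (W.b₈_ne_zero_of_char_three hb₂)

end WeierstrassCurve

open Classical in
/-- Let `p = 2` or `p = 3` and let `K` be an algebraically closed field of
characteristic `p`. An elliptic curve `E` over `K` is supersingular (i.e. its group of
`K`-points has trivial `p`-torsion) if and only if `j(E) = 0`. -/
theorem supersingular_iff_j_eq_zero_of_char_two_or_three (p : ℕ) (hp : p = 2 ∨ p = 3)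
    (K : Type) [Field K] [IsAlgClosed K] [CharP K p]
    (E : WeierstrassCurve K) [E.IsElliptic] :
    (∀ P : E.toAffine.Point, p • P = 0 → P = 0) ↔ E.j = 0 := by
  obtain rfl | rfl := hp
  · rw [E.j_eq_zero_iff_of_char_two]
    exact E.trivial_two_torsion_iff_a₁_eq_zero_of_char_two
  · rw [E.j_eq_zero_iff_of_char_three]
    exact E.trivial_three_torsion_iff_b₂_eq_zero_of_char_three
end

section
/- Let p be a prime and R a commutative ring in which p·1 = 0. Let F and G be formal group laws over R and let φ : F → G be a homomorphism of formal group laws whose linear coefficient (the coefficient of T in φ) is 0. Then there exists a power series ψ ∈ R⟦T⟧ with zero constant term such that φ(T) = ψ(T^p) (equivalently, the coefficient of T^m in φ vanishes whenever p does not divide m); moreover ψ is a homomorphism of formal group laws from F^(p) to G, where F^(p) denotes the formal group law obtained from F by raising each coefficient to the p-th power. -/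
noncomputable section

/-- The total degree of a monomial exponent. -/
def FGL.degSum {σ : Type} (d : σ →₀ ℕ) : ℕ := d.sum fun _ n => n

/-- Substitution `F(a, b)` of the pair `(a, b)` into a two-variable power series
`F ∈ R⟦X,Y⟧`.  This is the legitimate substitution whenever `a` and `b` have zero
constant term, since then only finitely many monomials of `F` contribute to each
coefficient. -/
def FGL.subst2 {R : Type} [CommRing R] {σ : Type} (F : MvPowerSeries (Fin 2) R)
    (a b : MvPowerSeries σ R) : MvPowerSeries σ R :=
  fun d =>
    MvPowerSeries.coeff d
      (∑ q ∈ Finset.range (FGL.degSum d + 1) ×ˢ Finset.range (FGL.degSum d + 1),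
        MvPowerSeries.C (σ := σ) (R := R)
            (MvPowerSeries.coeff (Finsupp.single 0 q.1 + Finsupp.single 1 q.2) F) *
          (a ^ q.1 * b ^ q.2))

/-- Substitution `φ(s)` of `s` into a one-variable power series `φ ∈ R⟦T⟧`.  This is the
legitimate substitution whenever `s` has zero constant term. -/
def FGL.subst1 {R : Type} [CommRing R] {σ : Type} (φ : PowerSeries R)
    (s : MvPowerSeries σ R) : MvPowerSeries σ R :=
  fun d =>
    MvPowerSeries.coeff d
      (∑ k ∈ Finset.range (FGL.degSum d + 1),
        MvPowerSeries.C (σ := σ) (R := R) (PowerSeries.coeff k φ) * s ^ k)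

/-- `F ∈ R⟦X,Y⟧` is a (one-dimensional, commutative) formal group law over `R`:
`F(X,0) = X`, `F(0,Y) = Y`, `F(X,Y) = F(Y,X)` and `F(F(X,Y),Z) = F(X,F(Y,Z))`. -/
structure IsFGL {R : Type} [CommRing R] (F : MvPowerSeries (Fin 2) R) : Prop where
  substXzero : FGL.subst2 F (PowerSeries.X : MvPowerSeries Unit R) 0 = PowerSeries.X
  substZeroX : FGL.subst2 F 0 (PowerSeries.X : MvPowerSeries Unit R) = PowerSeries.X
  comm : FGL.subst2 F (MvPowerSeries.X (1 : Fin 2)) (MvPowerSeries.X (0 : Fin 2)) = F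
  assoc : FGL.subst2 F
      (FGL.subst2 F (MvPowerSeries.X (0 : Fin 3)) (MvPowerSeries.X (1 : Fin 3)))
        (MvPowerSeries.X (2 : Fin 3)) =
    FGL.subst2 F (MvPowerSeries.X (0 : Fin 3))
      (FGL.subst2 F (MvPowerSeries.X (1 : Fin 3)) (MvPowerSeries.X (2 : Fin 3)))

/-- `φ ∈ R⟦T⟧` is a homomorphism of formal group laws `F → G`: it has zero constant
term and satisfies `φ(F(X,Y)) = G(φ(X), φ(Y))`. -/
structure IsFGLHom {R : Type} [CommRing R] (F G : MvPowerSeries (Fin 2) R)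
    (φ : PowerSeries R) : Prop where
  constantCoeff_eq_zero : PowerSeries.constantCoeff φ = 0
  hom : FGL.subst1 φ F =
    FGL.subst2 G (FGL.subst1 φ (MvPowerSeries.X (0 : Fin 2)))
      (FGL.subst1 φ (MvPowerSeries.X (1 : Fin 2)))

end

noncomputable section

/-- The series obtained from `F` by raising each coefficient to the `p`-th power; in
characteristic `p` this is the Frobenius twist `F^(p)`. -/
def FGL.frobTwist {R : Type} [CommRing R] (p : ℕ) (F : MvPowerSeries (Fin 2) R) :
    MvPowerSeries (Fin 2) R :=
  fun d => (MvPowerSeries.coeff d F) ^ p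

/-!
Differentiating `φ(F(X,Y)) = G(φ(X), φ(Y))` with respect to `Y` at `Y = 0` gives
`φ'(X) · F_Y(X,0) = G_Y(φ(X),0) · φ'(0) = 0`. Since `F_Y(X,0)` has constant term `1`, `φ' = 0`,
so in characteristic `p` only exponents divisible by `p` occur in `φ`, i.e. `φ(T) = ψ(T^p)`.
In characteristic `p` we also have `F(X,Y)^p = F^(p)(X^p, Y^p)`, hence
`ψ(F^(p))(X^p, Y^p) = φ(F(X,Y)) = G(ψ(X^p), ψ(Y^p)) = G(ψ(X), ψ(Y))(X^p, Y^p)`, and the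
substitution `X ↦ X^p, Y ↦ Y^p` is injective.
-/

theorem PowerSeries.exists_eq_expand_of_derivative_eq_zero {R : Type*} [CommRing R] {p : ℕ}
    (hp : p.Prime) [CharP R p] {φ : PowerSeries R} (h : derivative R φ = 0) :
    ∃ ψ, φ = expand p hp.ne_zero ψ := by
  have := Fact.mk hp
  refine ⟨mk fun n => coeff (p * n) φ, ext fun n => ?_⟩
  rw [coeff_expand]
  split_ifs with hn
  · rw [coeff_mk, Nat.mul_div_cancel' hn]
  obtain ⟨m, rfl⟩ : ∃ m, n = m + 1 :=
    Nat.exists_eq_succ_of_ne_zero (by rintro rfl; exact hn (dvd_zero p))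
  have hunit : IsUnit ((m + 1 : ℕ) : R) := by
    have : IsUnit ((m + 1 : ℕ) : ZMod p) :=
      isUnit_iff_ne_zero.mpr (by rwa [Ne, ZMod.natCast_eq_zero_iff])
    simpa using this.map (ZMod.castHom (dvd_refl p) R)
  have hm := congrArg (coeff m) h
  rw [coeff_derivative, map_zero] at hm
  exact hunit.mul_left_eq_zero.mp (by exact_mod_cast hm)

namespace FGL

open MvPowerSeries Finset

section Substitution

variable {R : Type} [CommRing R] {σ : Type}

theorem coeff_pow_eq_zero_of_degree_lt {a : MvPowerSeries σ R} (ha : constantCoeff a = 0)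
    {k : ℕ} {d : σ →₀ ℕ} (h : d.degree < k) : coeff d (a ^ k) = 0 :=
  coeff_of_lt_order ((Nat.cast_lt.mpr h).trans_le (le_order_pow_of_constantCoeff_eq_zero k ha))

theorem coeff_pow_mul_pow_eq_zero_of_degree_lt {a b : MvPowerSeries σ R}
    (ha : constantCoeff a = 0) (hb : constantCoeff b = 0) {i j : ℕ} {d : σ →₀ ℕ}
    (h : d.degree < i + j) : coeff d (a ^ i * b ^ j) = 0 := by
  refine coeff_of_lt_order ((Nat.cast_lt.mpr h).trans_le (le_trans ?_ le_order_mul))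
  push_cast
  exact add_le_add (le_order_pow_of_constantCoeff_eq_zero i ha)
    (le_order_pow_of_constantCoeff_eq_zero j hb)

theorem coeff_subst1 (φ : PowerSeries R) (s : MvPowerSeries σ R) (d : σ →₀ ℕ) :
    coeff d (subst1 φ s) =
      ∑ k ∈ range (d.degree + 1), PowerSeries.coeff k φ * coeff d (s ^ k) := by
  change coeff d (∑ k ∈ range (degSum d + 1), C (PowerSeries.coeff k φ) * s ^ k) = _
  simp only [map_sum, coeff_C_mul]
  rfl

theorem coeff_subst2 (F : MvPowerSeries (Fin 2) R) (a b : MvPowerSeries σ R) (d : σ →₀ ℕ) :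
    coeff d (subst2 F a b) =
      ∑ q ∈ range (d.degree + 1) ×ˢ range (d.degree + 1),
        coeff (Finsupp.single 0 q.1 + Finsupp.single 1 q.2) F * coeff d (a ^ q.1 * b ^ q.2) := by
  change coeff d (∑ q ∈ range (degSum d + 1) ×ˢ range (degSum d + 1),
    C (coeff (Finsupp.single 0 q.1 + Finsupp.single 1 q.2) F) * (a ^ q.1 * b ^ q.2)) = _
  simp only [map_sum, coeff_C_mul]
  rfl

theorem coeff_subst1_of_degree_le {φ : PowerSeries R} {s : MvPowerSeries σ R}
    (hs : constantCoeff s = 0) {d : σ →₀ ℕ} {N : ℕ} (hN : d.degree ≤ N) :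
    coeff d (subst1 φ s) = ∑ k ∈ range (N + 1), PowerSeries.coeff k φ * coeff d (s ^ k) := by
  rw [coeff_subst1]
  refine sum_subset (range_subset_range.mpr (by omega)) fun k _ hk => ?_
  rw [coeff_pow_eq_zero_of_degree_lt hs (by simpa using hk), mul_zero]

theorem coeff_subst2_of_degree_le {F : MvPowerSeries (Fin 2) R} {a b : MvPowerSeries σ R}
    (ha : constantCoeff a = 0) (hb : constantCoeff b = 0) {d : σ →₀ ℕ} {N : ℕ}
    (hN : d.degree ≤ N) :
    coeff d (subst2 F a b) =
      ∑ q ∈ range (N + 1) ×ˢ range (N + 1),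
        coeff (Finsupp.single 0 q.1 + Finsupp.single 1 q.2) F * coeff d (a ^ q.1 * b ^ q.2) := by
  rw [coeff_subst2]
  refine sum_subset (product_subset_product (range_subset_range.mpr (by omega))
    (range_subset_range.mpr (by omega))) fun q _ hq => ?_
  simp only [mem_product, mem_range, not_and_or, not_lt] at hq
  rw [coeff_pow_mul_pow_eq_zero_of_degree_lt ha hb (by omega), mul_zero]

theorem constantCoeff_subst1 (φ : PowerSeries R) (s : MvPowerSeries σ R) :
    constantCoeff (subst1 φ s) = PowerSeries.constantCoeff φ := by
  rw [← coeff_zero_eq_constantCoeff_apply, coeff_subst1]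
  simp

theorem map_subst2 {S : Type} [CommRing S] (f : R →+* S) (F : MvPowerSeries (Fin 2) R)
    (a b : MvPowerSeries σ R) :
    map f (subst2 F a b) = subst2 (map f F) (map f a) (map f b) := by
  ext d
  simp [coeff_subst2, ← map_pow, ← map_mul]

theorem subst1_X (φ : PowerSeries R) : subst1 φ (PowerSeries.X : PowerSeries R) = φ := by
  ext n
  change coeff (Finsupp.single () n) _ = _
  rw [coeff_subst1, Finsupp.degree_single, sum_eq_single n]
  · simp [← PowerSeries.coeff_def]
  · intro k _ hk
    simp [← PowerSeries.coeff_def, PowerSeries.coeff_X_pow, Ne.symm hk]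
  · simp

end Substitution

section Expand

variable {R : Type} [CommRing R] {σ : Type} (p : ℕ) (hp : p ≠ 0)

theorem expand_injective : Function.Injective (expand p hp : MvPowerSeries σ R → _) := by
  intro A B h
  ext e
  rw [← coeff_expand_smul p hp A e, h, coeff_expand_smul]

theorem coeff_expand_congr {A B : MvPowerSeries σ R} {d : σ →₀ ℕ}
    (h : ∀ e : σ →₀ ℕ, e.degree ≤ d.degree → coeff e A = coeff e B) :
    coeff d (expand p hp A) = coeff d (expand p hp B) := by
  by_cases hd : ∀ i, p ∣ d i
  · obtain ⟨e, rfl⟩ : ∃ e : σ →₀ ℕ, d = p • e :=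
      ⟨d.mapRange (· / p) (Nat.zero_div p), by ext i; simp [Nat.mul_div_cancel' (hd i)]⟩
    rw [coeff_expand_smul, coeff_expand_smul]
    exact h e (Finsupp.degree_mono (le_self_nsmul zero_le hp))
  · obtain ⟨i, hi⟩ := not_forall.mp hd
    rw [coeff_expand_of_not_dvd p hp _ hi, coeff_expand_of_not_dvd p hp _ hi]

theorem expand_subst1 (φ : PowerSeries R) {A : MvPowerSeries σ R} (hA : constantCoeff A = 0) :
    expand p hp (subst1 φ A) = subst1 φ (expand p hp A) := by
  ext d
  rw [coeff_subst1, coeff_expand_congr p hp (B := ∑ k ∈ range (d.degree + 1),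
    C (PowerSeries.coeff k φ) * A ^ k) fun e he => by
      simp only [coeff_subst1_of_degree_le hA he, map_sum, coeff_C_mul]]
  simp [expand_C, coeff_C_mul]

theorem expand_subst2 (F : MvPowerSeries (Fin 2) R) {a b : MvPowerSeries σ R}
    (ha : constantCoeff a = 0) (hb : constantCoeff b = 0) :
    expand p hp (subst2 F a b) = subst2 F (expand p hp a) (expand p hp b) := by
  ext d
  rw [coeff_subst2, coeff_expand_congr p hp (B := ∑ q ∈ range (d.degree + 1) ×ˢ
    range (d.degree + 1),
      C (coeff (Finsupp.single 0 q.1 + Finsupp.single 1 q.2) F) * (a ^ q.1 * b ^ q.2))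
    fun e he => by simp only [coeff_subst2_of_degree_le ha hb he, map_sum, coeff_C_mul]]
  simp [expand_C, coeff_C_mul]

theorem subst1_expand (ψ : PowerSeries R) {s : MvPowerSeries σ R} (hs : constantCoeff s = 0) :
    subst1 (PowerSeries.expand p hp ψ) s = subst1 ψ (s ^ p) := by
  ext d
  have hps : constantCoeff (s ^ p) = 0 := by rw [map_pow, hs, zero_pow hp]
  rw [coeff_subst1_of_degree_le hs (N := p * d.degree) (Nat.le_mul_of_pos_left _ (by omega)),
    coeff_subst1_of_degree_le hps le_rfl]
  have hinj : Set.InjOn (p * ·) (range (d.degree + 1) : Set ℕ) :=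
    (mul_right_injective₀ hp).injOn
  calc _ = ∑ k ∈ (range (d.degree + 1)).image (p * ·),
        PowerSeries.coeff k (PowerSeries.expand p hp ψ) * coeff d (s ^ k) := by
        refine (sum_subset ?_ fun k hk hk' => ?_).symm
        · intro k hk
          obtain ⟨j, hj, rfl⟩ := mem_image.mp hk
          simp only [mem_range] at hj ⊢
          nlinarith
        · rw [PowerSeries.coeff_expand_of_not_dvd p hp, zero_mul]
          rintro ⟨j, rfl⟩
          refine hk' (mem_image.mpr ⟨j, ?_, rfl⟩)
          simp only [mem_range] at hk ⊢
          exact Nat.lt_succ_of_le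
            (Nat.le_of_mul_le_mul_left (Nat.lt_succ_iff.mp hk) (Nat.pos_of_ne_zero hp))
    _ = _ := by
        rw [sum_image hinj]
        simp [pow_mul]

end Expand

section RestrictToVar

variable {R : Type} [CommRing R] {σ : Type}

/-- Sets every variable other than `X i` to zero. -/
def restrictToVar (i : σ) : MvPowerSeries σ R →+* PowerSeries R where
  toFun A := PowerSeries.mk fun n => coeff (Finsupp.single i n) A
  map_one' := by
    classical
    ext n
    simp [coeff_one, PowerSeries.coeff_one, Finsupp.single_eq_zero]
  map_mul' A B := by
    classical
    ext n
    rw [PowerSeries.coeff_mul, PowerSeries.coeff_mk, coeff_mul, Finsupp.antidiagonal_single,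
      sum_map]
    simp
  map_zero' := by ext; simp
  map_add' A B := by ext; simp

theorem coeff_restrictToVar (i : σ) (A : MvPowerSeries σ R) (n : ℕ) :
    PowerSeries.coeff n (restrictToVar i A) = coeff (Finsupp.single i n) A := by
  simp [restrictToVar]

end RestrictToVar

variable {R : Type} [CommRing R]

theorem subst2_X_zero (F : MvPowerSeries (Fin 2) R) :
    subst2 F (PowerSeries.X : PowerSeries R) 0 = restrictToVar 0 F := by
  ext n
  change coeff (Finsupp.single () n) _ = _
  rw [coeff_restrictToVar, coeff_subst2, Finsupp.degree_single, sum_eq_single (n, 0)]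
  · simp [← PowerSeries.coeff_def]
  · rintro ⟨i, _ | j⟩ _ hij
    · simp [← PowerSeries.coeff_def, PowerSeries.coeff_X_pow, Ne.symm (by simpa using hij)]
    · simp
  · simp

theorem subst2_zero_X (F : MvPowerSeries (Fin 2) R) :
    subst2 F 0 (PowerSeries.X : PowerSeries R) = restrictToVar 1 F := by
  ext n
  change coeff (Finsupp.single () n) _ = _
  rw [coeff_restrictToVar, coeff_subst2, Finsupp.degree_single, sum_eq_single (0, n)]
  · simp [← PowerSeries.coeff_def]
  · rintro ⟨_ | i, j⟩ _ hij
    · simp [← PowerSeries.coeff_def, PowerSeries.coeff_X_pow, Ne.symm (by simpa using hij)]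
    · simp
  · simp

/-- Writing `A = A₀(X) + Y · A₁(X) + O(Y²)`, this is `A₁ = (∂A/∂Y)(X, 0)`; `A₀` is
`restrictToVar 0 A`. -/
def coeffY (A : MvPowerSeries (Fin 2) R) : PowerSeries R :=
  restrictToVar 0 (pderiv R 1 A)

theorem coeff_coeffY (A : MvPowerSeries (Fin 2) R) (m : ℕ) :
    PowerSeries.coeff m (coeffY A) = coeff (Finsupp.single 0 m + Finsupp.single 1 1) A := by
  simp [coeffY, coeff_restrictToVar, coeff_pderiv]

theorem coeffY_mul (A B : MvPowerSeries (Fin 2) R) :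
    coeffY (A * B) = restrictToVar 0 A * coeffY B + restrictToVar 0 B * coeffY A := by
  simp [coeffY]

theorem coeffY_pow (A : MvPowerSeries (Fin 2) R) (k : ℕ) :
    coeffY (A ^ k) = k * restrictToVar 0 A ^ (k - 1) * coeffY A := by
  simp [coeffY, mul_assoc]

theorem coeffY_subst2_eq_zero (G : MvPowerSeries (Fin 2) R) {a b : MvPowerSeries (Fin 2) R}
    (ha : coeffY a = 0) (hb : coeffY b = 0) : coeffY (subst2 G a b) = 0 := by
  ext m
  rw [coeff_coeffY, coeff_subst2]
  refine sum_eq_zero fun q _ => ?_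
  rw [← coeff_coeffY, coeffY_mul, coeffY_pow, coeffY_pow, ha, hb]
  simp

theorem coeffY_subst1_X_zero (φ : PowerSeries R) : coeffY (subst1 φ (X 0)) = 0 := by
  ext m
  rw [coeff_coeffY, coeff_subst1]
  refine sum_eq_zero fun k _ => ?_
  simp only [X_pow_eq, coeff_monomial, mul_ite, mul_one, mul_zero]
  exact if_neg fun h => by simpa using congrArg (· 1) h

theorem coeffY_subst1_X_one (φ : PowerSeries R) :
    coeffY (subst1 φ (X 1)) = PowerSeries.C (PowerSeries.coeff 1 φ) := by
  ext m
  rw [coeff_coeffY, coeff_subst1, PowerSeries.coeff_C]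
  rcases m with _ | m
  · simp [X_pow_eq, coeff_monomial, sum_range_succ]
  · simp only [X_pow_eq, coeff_monomial, mul_ite, mul_one, mul_zero]
    exact sum_eq_zero fun k _ => if_neg fun h => by simpa using congrArg (· 0) h

theorem coeffY_subst1 (φ : PowerSeries R) {s : MvPowerSeries (Fin 2) R}
    (hs : restrictToVar 0 s = PowerSeries.X) :
    coeffY (subst1 φ s) = PowerSeries.derivative R φ * coeffY s := by
  have hs0 : constantCoeff s = 0 := by
    simpa [coeff_restrictToVar] using congrArg (PowerSeries.coeff 0) hs
  ext m
  rw [coeff_coeffY, coeff_subst1_of_degree_le hs0 (N := m + 1) (by simp), PowerSeries.coeff_mul,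
    Nat.sum_antidiagonal_eq_sum_range_succ_mk, sum_range_succ']
  simp_rw [← coeff_coeffY, coeffY_pow, hs, PowerSeries.coeff_derivative]
  refine (add_eq_left.mpr (by simp)).trans (sum_congr rfl fun i hi => ?_)
  rw [mul_assoc, ← map_natCast PowerSeries.C, PowerSeries.coeff_C_mul, Nat.add_sub_cancel,
    PowerSeries.coeff_X_pow_mul', if_pos (by simpa [Nat.lt_succ_iff] using hi)]
  push_cast
  ring

theorem frobTwist_eq_map (p : ℕ) [ExpChar R p] (F : MvPowerSeries (Fin 2) R) :
    frobTwist p F = map (frobenius R p) F := by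
  ext d
  rw [coeff_map, frobenius_def]
  rfl

end FGL

namespace IsFGL

open MvPowerSeries FGL

variable {R : Type} [CommRing R] {F : MvPowerSeries (Fin 2) R}

theorem restrictToVar_zero (hF : IsFGL F) : restrictToVar 0 F = PowerSeries.X := by
  rw [← subst2_X_zero, hF.substXzero]

theorem restrictToVar_one (hF : IsFGL F) : restrictToVar 1 F = PowerSeries.X := by
  rw [← subst2_zero_X, hF.substZeroX]

theorem constantCoeff_eq_zero (hF : IsFGL F) : constantCoeff F = 0 := by
  simpa [coeff_restrictToVar] using congrArg (PowerSeries.coeff 0) hF.restrictToVar_zero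

theorem isUnit_coeffY (hF : IsFGL F) : IsUnit (coeffY F) := by
  refine PowerSeries.isUnit_iff_constantCoeff.mpr ?_
  have h := congrArg (PowerSeries.coeff 1) hF.restrictToVar_one
  rw [coeff_restrictToVar, PowerSeries.coeff_X, if_pos rfl] at h
  rw [← PowerSeries.coeff_zero_eq_constantCoeff_apply, coeff_coeffY, Finsupp.single_zero,
    zero_add, h]
  exact isUnit_one

theorem map {S : Type} [CommRing S] (hF : IsFGL F) (f : R →+* S) :
    IsFGL (MvPowerSeries.map f F) where
  substXzero := by
    simpa [map_subst2, PowerSeries.X] using congrArg (MvPowerSeries.map f) hF.substXzero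
  substZeroX := by
    simpa [map_subst2, PowerSeries.X] using congrArg (MvPowerSeries.map f) hF.substZeroX
  comm := by
    simpa [map_subst2] using congrArg (MvPowerSeries.map f) hF.comm
  assoc := by
    simpa [map_subst2] using congrArg (MvPowerSeries.map f) hF.assoc

end IsFGL

theorem IsFGLHom.derivative_eq_zero {R : Type} [CommRing R] {F G : MvPowerSeries (Fin 2) R}
    {φ : PowerSeries R} (hφ : IsFGLHom F G φ) (hF : IsFGL F) (h1 : PowerSeries.coeff 1 φ = 0) :
    PowerSeries.derivative R φ = 0 := by
  have h := congrArg FGL.coeffY hφ.hom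
  rw [FGL.coeffY_subst1 φ hF.restrictToVar_zero,
    FGL.coeffY_subst2_eq_zero G (FGL.coeffY_subst1_X_zero φ)
      (by rw [FGL.coeffY_subst1_X_one, h1, map_zero])] at h
  exact hF.isUnit_coeffY.mul_left_eq_zero.mp h

theorem fgl_hom_factors_through_frobenius_general {p : ℕ} (hp : p.Prime) {R : Type} [CommRing R]
    (hpR : (p : R) = 0) {F G : MvPowerSeries (Fin 2) R} (hF : IsFGL F)
    {φ : PowerSeries R} (hφ : IsFGLHom F G φ) (h1 : PowerSeries.coeff 1 φ = 0) :
    ∃ ψ : PowerSeries R, PowerSeries.constantCoeff ψ = 0 ∧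
      φ = FGL.subst1 ψ ((PowerSeries.X : PowerSeries R) ^ p : MvPowerSeries Unit R) ∧
      IsFGL (FGL.frobTwist p F) ∧ IsFGLHom (FGL.frobTwist p F) G ψ := by
  open MvPowerSeries FGL in
  rcases subsingleton_or_nontrivial R with hR | hR
  · have (σ : Type) : Subsingleton (MvPowerSeries σ R) :=
      inferInstanceAs (Subsingleton ((σ →₀ ℕ) → R))
    exact ⟨0, Subsingleton.elim _ _, Subsingleton.elim _ _,
      ⟨Subsingleton.elim _ _, Subsingleton.elim _ _, Subsingleton.elim _ _, Subsingleton.elim _ _⟩,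
      Subsingleton.elim _ _, Subsingleton.elim _ _⟩
  have : CharP R p := (CharP.charP_iff_prime_eq_zero hp).mpr hpR
  have := Fact.mk hp
  obtain ⟨ψ, rfl⟩ :=
    PowerSeries.exists_eq_expand_of_derivative_eq_zero hp (hφ.derivative_eq_zero hF h1)
  have hψ : PowerSeries.constantCoeff ψ = 0 := by simpa using hφ.constantCoeff_eq_zero
  have hFp : IsFGL (frobTwist p F) := frobTwist_eq_map p F ▸ hF.map (frobenius R p)
  refine ⟨ψ, hψ, ?_, hFp, hψ, expand_injective p hp.ne_zero ?_⟩
  · rw [← subst1_expand p hp.ne_zero ψ (s := (PowerSeries.X : PowerSeries R)) (constantCoeff_X ()),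
      subst1_X]
  calc expand p _ (subst1 ψ (frobTwist p F))
      = subst1 ψ (expand p _ (frobTwist p F)) := expand_subst1 _ _ ψ hFp.constantCoeff_eq_zero
    _ = subst1 (PowerSeries.expand p _ ψ) F := by
      rw [subst1_expand _ _ ψ hF.constantCoeff_eq_zero, frobTwist_eq_map, ← map_expand,
        map_frobenius_expand]
    _ = subst2 G (subst1 (PowerSeries.expand p _ ψ) (X 0))
          (subst1 (PowerSeries.expand p _ ψ) (X 1)) := hφ.hom
    _ = expand p _ (subst2 G (subst1 ψ (X 0)) (subst1 ψ (X 1))) := by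
      rw [expand_subst2, expand_subst1, expand_subst1, subst1_expand, subst1_expand, expand_X,
        expand_X]
      all_goals simp [constantCoeff_subst1, hψ]

/-- **Homomorphisms with vanishing derivative factor through Frobenius.**  Let `p` be a
prime and `R` a commutative ring with `p · 1 = 0`.  If `φ : F → G` is a homomorphism of
formal group laws whose coefficient of `T` is `0`, then `φ(T) = ψ(T^p)` for some power
series `ψ` with zero constant term, the Frobenius twist `F^(p)` is a formal group law,
and `ψ` is a homomorphism of formal group laws `F^(p) → G`. -/
theorem fgl_hom_factors_through_frobenius {p : ℕ} (hp : p.Prime) {R : Type} [CommRing R]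
    (hpR : (p : R) = 0) {F G : MvPowerSeries (Fin 2) R} (hF : IsFGL F) (hG : IsFGL G)
    {φ : PowerSeries R} (hφ : IsFGLHom F G φ) (h1 : PowerSeries.coeff 1 φ = 0) :
    ∃ ψ : PowerSeries R, PowerSeries.constantCoeff ψ = 0 ∧
      φ = FGL.subst1 ψ ((PowerSeries.X : PowerSeries R) ^ p : MvPowerSeries Unit R) ∧
      IsFGL (FGL.frobTwist p F) ∧ IsFGLHom (FGL.frobTwist p F) G ψ :=
  fgl_hom_factors_through_frobenius_general hp hpR hF hφ h1

end
end
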